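/- arXiv:2505.03202 — 5 statements merged into one kernel-verified Lean document; each statement's English description precedes it below -/
import Mathlib

section
/- Let H : (0,T) → ℝ be twice differentiable and satisfy the Riccati differential inequality H'' + (2/N) (H')² + 2K H' ≤ 0 on (0,T), for constants N > 0 and K ∈ ℝ. Then the entropy power 𝒩(t) = exp(2 H(t)/N) satisfies 𝒩''(t) ≤ -2K 𝒩'(t) for all t ∈ (0,T). -/
open Real Set

/-- If `H` is twice differentiable on `(0,T)` and satisfies the Riccati
differential inequality `H'' + (2/N)(H')² + 2K H' ≤ 0` there (with `N > 0`), then the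
entropy power `𝒩(t) = exp(2H(t)/N)` satisfies `𝒩'' ≤ -2K 𝒩'` on `(0,T)`. -/
theorem entropy_power_K_concave (H : ℝ → ℝ) (N K T : ℝ) (hN : 0 < N)
    (hd1 : ∀ t ∈ Ioo (0:ℝ) T, DifferentiableAt ℝ H t)
    (hd2 : ∀ t ∈ Ioo (0:ℝ) T, DifferentiableAt ℝ (deriv H) t)
    (hRic : ∀ t ∈ Ioo (0:ℝ) T,
      deriv (deriv H) t + (2 / N) * (deriv H t) ^ 2 + 2 * K * deriv H t ≤ 0) :
    ∀ t ∈ Ioo (0:ℝ) T,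
      deriv (deriv (fun s => Real.exp (2 * H s / N))) t
        ≤ -2 * K * deriv (fun s => Real.exp (2 * H s / N)) t := by
  have hinner : ∀ t ∈ Ioo (0:ℝ) T,
      HasDerivAt (fun s => 2 * H s / N) (2 * deriv H t / N) t := by
    intro t ht
    exact (((hd1 t ht).hasDerivAt).const_mul 2).div_const N
  have hderiv : ∀ t ∈ Ioo (0:ℝ) T,
      deriv (fun s => Real.exp (2 * H s / N)) t
        = Real.exp (2 * H t / N) * (2 * deriv H t / N) := by
    intro t ht
    exact ((hinner t ht).exp).deriv
  intro t ht
  have heq : deriv (fun s => Real.exp (2 * H s / N))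
      =ᶠ[nhds t] (fun s => Real.exp (2 * H s / N) * (2 * deriv H s / N)) := by
    filter_upwards [isOpen_Ioo.mem_nhds ht] with s hs using hderiv s hs
  have h2 : HasDerivAt (fun s => Real.exp (2 * H s / N) * (2 * deriv H s / N))
      (Real.exp (2 * H t / N) * (2 * deriv H t / N) * (2 * deriv H t / N)
        + Real.exp (2 * H t / N) * (2 * deriv (deriv H) t / N)) t := by
    exact ((hinner t ht).exp).mul ((((hd2 t ht).hasDerivAt).const_mul 2).div_const N)
  have h3 : deriv (deriv (fun s => Real.exp (2 * H s / N))) t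
      = Real.exp (2 * H t / N) * (2 * deriv H t / N) * (2 * deriv H t / N)
        + Real.exp (2 * H t / N) * (2 * deriv (deriv H) t / N) := by
    rw [heq.deriv_eq, h2.deriv]
  rw [h3, hderiv t ht]
  have he : 0 < Real.exp (2 * H t / N) := Real.exp_pos _
  have hR := hRic t ht
  have hN' : N ≠ 0 := ne_of_gt hN
  have key2 : Real.exp (2 * H t / N) * (2 / N) *
      (deriv (deriv H) t + 2 / N * (deriv H t) ^ 2 + 2 * K * deriv H t) ≤ 0 := by
    have h := mul_le_mul_of_nonneg_left hR
      (show (0:ℝ) ≤ Real.exp (2 * H t / N) * (2 / N) by positivity)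
    simpa using h
  ring_nf at key2 ⊢
  linarith
end

section
/- Let I : (0,∞) → ℝ be differentiable, nonnegative, and satisfy the Riccati inequality I'(t) + (2/N) I(t)² + 2K I(t) ≤ 0 for all t > 0, where N > 0 and K > 0 are constants. If moreover lim sup_{t→0+} t·I(t) ≤ N/2, then I(t) ≤ N K / (e^{2Kt} − 1) for all t > 0. -/
/-!
Where `I > 0`, the reciprocal `J = 1/I` satisfies the linear differential inequality
`J' ≥ a + b J` (here `a = 2/N`, `b = 2K`), i.e. `(J + a/b)' ≥ b (J + a/b)`, so
`e^{-bs} (J s + a/b)` is nondecreasing. Letting `s → 0⁺`, where `J > 0` and `e^{-bs} → 1`, gives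
`e^{-bt} (J t + a/b) ≥ a/b`, which rearranges to `I t ≤ b / (a (e^{bt} - 1))`.
Positivity of `I` on `(0, t]` once `I t > 0` comes from `I` being nonincreasing.
-/

open Real Set Filter Topology

theorem monotoneOn_exp_neg_mul_of_mul_le_deriv {f f' : ℝ → ℝ} {c : ℝ} {D : Set ℝ}
    (hD : Convex ℝ D) (hf : ∀ x ∈ D, HasDerivAt f (f' x) x) (hle : ∀ x ∈ D, c * f x ≤ f' x) :
    MonotoneOn (fun x => exp (-(c * x)) * f x) D := by
  have hderiv : ∀ x ∈ D, HasDerivAt (fun x => exp (-(c * x)) * f x)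
      (exp (-(c * x)) * (f' x - c * f x)) x := fun x hx =>
    ((((hasDerivAt_id' x).const_mul c).fun_neg.exp).fun_mul (hf x hx)).congr_deriv (by ring)
  refine monotoneOn_of_hasDerivWithinAt_nonneg hD
    (fun x hx => (hderiv x hx).continuousAt.continuousWithinAt)
    (fun x hx => (hderiv x (interior_subset hx)).hasDerivWithinAt) fun x hx => ?_
  have := hle x (interior_subset hx)
  exact mul_nonneg (exp_pos _).le (by linarith)

theorem mul_inv_add_div_le_neg_div_sq_of_riccati {a b y y' : ℝ} (hb : b ≠ 0) (hy : 0 < y)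
    (hric : y' + a * y ^ 2 + b * y ≤ 0) : b * (y⁻¹ + a / b) ≤ -y' / y ^ 2 := by
  rw [le_div_iff₀ (by positivity)]
  field_simp
  nlinarith

theorem antitoneOn_of_riccati {I : ℝ → ℝ} {a b : ℝ} (ha : 0 ≤ a) (hb : 0 ≤ b)
    (hd : ∀ t ∈ Ioi 0, DifferentiableAt ℝ I t) (hnn : ∀ t ∈ Ioi 0, 0 ≤ I t)
    (hric : ∀ t ∈ Ioi 0, deriv I t + a * I t ^ 2 + b * I t ≤ 0) :
    AntitoneOn I (Ioi 0) := by
  refine antitoneOn_of_deriv_nonpos (convex_Ioi 0)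
    (fun t ht => (hd t ht).continuousAt.continuousWithinAt)
    (fun t ht => (hd t (interior_subset ht)).differentiableWithinAt) fun t ht => ?_
  rw [interior_Ioi] at ht
  have := hric t ht
  have := hnn t ht
  nlinarith [mul_nonneg ha (sq_nonneg (I t))]

theorem le_div_mul_exp_sub_one_of_riccati {I : ℝ → ℝ} {a b : ℝ} (ha : 0 < a) (hb : 0 < b)
    (hd : ∀ t ∈ Ioi 0, DifferentiableAt ℝ I t) (hnn : ∀ t ∈ Ioi 0, 0 ≤ I t)
    (hric : ∀ t ∈ Ioi 0, deriv I t + a * I t ^ 2 + b * I t ≤ 0) {t : ℝ} (ht : 0 < t) :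
    I t ≤ b / (a * (exp (b * t) - 1)) := by
  have hE : 1 < exp (b * t) := one_lt_exp_iff.2 (by positivity)
  rcases (hnn t ht).eq_or_lt with h0 | hIt
  · rw [← h0]
    exact div_nonneg hb.le (mul_nonneg ha.le (by linarith))
  have hpos : ∀ s ∈ Ioc 0 t, 0 < I s := fun s hs =>
    hIt.trans_le (antitoneOn_of_riccati ha.le hb.le hd hnn hric hs.1 ht hs.2)
  have hmono : MonotoneOn (fun s => exp (-(b * s)) * ((I s)⁻¹ + a / b)) (Ioc 0 t) :=
    monotoneOn_exp_neg_mul_of_mul_le_deriv (convex_Ioc 0 t)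
      (fun s hs => ((hd s hs.1).hasDerivAt.inv (hpos s hs).ne').add_const _)
      fun s hs => mul_inv_add_div_le_neg_div_sq_of_riccati hb.ne' (hpos s hs) (hric s hs.1)
  have hlim : Tendsto (fun s => exp (-(b * s)) * (a / b)) (𝓝[>] 0) (𝓝 (a / b)) := by
    have : Continuous (fun s => exp (-(b * s)) * (a / b)) := by fun_prop
    simpa using (this.tendsto 0).mono_left nhdsWithin_le_nhds
  have hlow : a / b ≤ exp (-(b * t)) * ((I t)⁻¹ + a / b) := by
    refine le_of_tendsto hlim ?_
    filter_upwards [Ioo_mem_nhdsGT ht] with s hs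
    have hs' : s ∈ Ioc 0 t := ⟨hs.1, hs.2.le⟩
    calc exp (-(b * s)) * (a / b) ≤ exp (-(b * s)) * ((I s)⁻¹ + a / b) := by
          gcongr
          exact le_add_of_nonneg_left (inv_pos.2 (hpos s hs')).le
      _ ≤ _ := hmono hs' ⟨ht, le_rfl⟩ hs.2.le
  rw [exp_neg, ← div_eq_inv_mul, le_div_iff₀ (exp_pos _)] at hlow
  have hinv : a * (exp (b * t) - 1) / b ≤ (I t)⁻¹ := by
    have : a * (exp (b * t) - 1) / b = a / b * exp (b * t) - a / b := by ring
    linarith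
  rw [← inv_div]
  exact (le_inv_comm₀ (by positivity) hIt).1 hinv

theorem fisher_info_bound_K_general (I : ℝ → ℝ) (N K : ℝ) (hN : 0 < N) (hK : 0 < K)
    (hd : ∀ t ∈ Ioi (0:ℝ), DifferentiableAt ℝ I t)
    (hnn : ∀ t ∈ Ioi (0:ℝ), 0 ≤ I t)
    (hRic : ∀ t ∈ Ioi (0:ℝ), deriv I t + (2 / N) * (I t) ^ 2 + 2 * K * I t ≤ 0) :
    ∀ t ∈ Ioi (0:ℝ), I t ≤ N * K / (Real.exp (2 * K * t) - 1) := by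
  intro t ht
  calc I t ≤ 2 * K / (2 / N * (exp (2 * K * t) - 1)) :=
        le_div_mul_exp_sub_one_of_riccati (by positivity) (by positivity) hd hnn hRic ht
    _ = N * K / (exp (2 * K * t) - 1) := by
        rw [div_mul_eq_mul_div, div_div_eq_mul_div, mul_assoc, mul_comm K N,
          mul_div_mul_left _ _ two_ne_zero]

/-- If `I ≥ 0` is differentiable on `(0,∞)` and satisfies the Riccati
inequality `I' + (2/N) I² + 2K I ≤ 0` (with `N, K > 0`) and `limsup_{t→0+} t I(t) ≤ N/2`,
then `I(t) ≤ NK/(e^{2Kt} − 1)` for all `t > 0`. -/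
theorem fisher_info_bound_K (I : ℝ → ℝ) (N K : ℝ) (hN : 0 < N) (hK : 0 < K)
    (hd : ∀ t ∈ Ioi (0:ℝ), DifferentiableAt ℝ I t)
    (hnn : ∀ t ∈ Ioi (0:ℝ), 0 ≤ I t)
    (hRic : ∀ t ∈ Ioi (0:ℝ), deriv I t + (2 / N) * (I t) ^ 2 + 2 * K * I t ≤ 0)
    (hlim : Filter.limsup (fun t => t * I t) (nhdsWithin 0 (Ioi 0)) ≤ N / 2) :
    ∀ t ∈ Ioi (0:ℝ), I t ≤ N * K / (Real.exp (2 * K * t) - 1) :=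
  fisher_info_bound_K_general I N K hN hK hd hnn hRic
end

section
/- Let I : (0,∞) → ℝ be differentiable, nonnegative, and satisfy I'(t) + (2/N) I(t)² ≤ 0 for all t > 0, where N > 0. If lim sup_{t→0+} t·I(t) ≤ N/2, then I(t) ≤ N/(2t) for all t > 0. -/
open Real Set Filter

/-! Where `I > 0`, the Riccati inequality says `(1/I)' ≥ 2/N`, so `1/I(t) ≥ 1/I(s) + 2(t - s)/N
> 2(t - s)/N` for `0 < s < t`; letting `s → 0` gives `1/I(t) ≥ 2t/N`. Positivity of `I` on `(0, t]`
comes from `I' ≤ 0`, since the claim is trivial when `I(t) ≤ 0`. -/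

section Riccati

variable {f : ℝ → ℝ} {k : ℝ}

theorem antitoneOn_of_deriv_add_mul_sq_nonpos {D : Set ℝ} (hD : Convex ℝ D) (hk : 0 ≤ k)
    (hd : ∀ x ∈ D, DifferentiableAt ℝ f x) (h : ∀ x ∈ D, deriv f x + k * f x ^ 2 ≤ 0) :
    AntitoneOn f D := by
  refine antitoneOn_of_deriv_nonpos hD (fun x hx => (hd x hx).continuousAt.continuousWithinAt)
    (fun x hx => (hd x (interior_subset hx)).differentiableWithinAt) fun x hx => ?_
  have := h x (interior_subset hx)
  nlinarith [mul_nonneg hk (sq_nonneg (f x))]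

theorem monotoneOn_inv_sub_mul_of_deriv_add_mul_sq_nonpos {D : Set ℝ} (hD : Convex ℝ D)
    (hd : ∀ x ∈ D, DifferentiableAt ℝ f x) (hpos : ∀ x ∈ D, 0 < f x)
    (h : ∀ x ∈ D, deriv f x + k * f x ^ 2 ≤ 0) :
    MonotoneOn (fun x => (f x)⁻¹ - k * x) D := by
  have hderiv : ∀ x ∈ D,
      HasDerivAt (fun x => (f x)⁻¹ - k * x) (-deriv f x / f x ^ 2 - k) x := fun x hx => by
    have := ((hd x hx).hasDerivAt.inv (hpos x hx).ne').sub ((hasDerivAt_id' x).const_mul k)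
    rwa [mul_one] at this
  refine monotoneOn_of_deriv_nonneg hD
    (fun x hx => (hderiv x hx).continuousAt.continuousWithinAt)
    (fun x hx => (hderiv x (interior_subset hx)).differentiableAt.differentiableWithinAt)
    fun x hx => ?_
  have hx := interior_subset hx
  rw [(hderiv x hx).deriv, sub_nonneg, le_div_iff₀ (pow_pos (hpos x hx) 2)]
  linarith [h x hx]

theorem mul_le_inv_of_deriv_add_mul_sq_nonpos {t : ℝ} (ht : 0 < t)
    (hd : ∀ x ∈ Ioc 0 t, DifferentiableAt ℝ f x) (hpos : ∀ x ∈ Ioc 0 t, 0 < f x)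
    (h : ∀ x ∈ Ioc 0 t, deriv f x + k * f x ^ 2 ≤ 0) :
    k * t ≤ (f t)⁻¹ := by
  have hmono := monotoneOn_inv_sub_mul_of_deriv_add_mul_sq_nonpos (convex_Ioc 0 t) hd hpos h
  have hlower : ∀ s ∈ Ioo 0 t, k * t - k * s ≤ (f t)⁻¹ := fun s hs => by
    have hs' : s ∈ Ioc 0 t := Ioo_subset_Ioc_self hs
    have hgrowth : (f s)⁻¹ - k * s ≤ (f t)⁻¹ - k * t := hmono hs' (right_mem_Ioc.2 ht) hs.2.le
    linarith [inv_pos.2 (hpos s hs')]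
  have hlim : Tendsto (fun s => k * t - k * s) (nhdsWithin 0 (Ioi 0)) (nhds (k * t)) :=
    ((continuous_const.sub (continuous_const.mul continuous_id)).tendsto' 0 _ (by simp)).mono_left
      nhdsWithin_le_nhds
  exact le_of_tendsto hlim (eventually_of_mem (Ioo_mem_nhdsGT ht) hlower)

end Riccati

theorem fisher_info_bound_general (I : ℝ → ℝ) (N : ℝ) (hN : 0 < N)
    (hd : ∀ t ∈ Ioi (0:ℝ), DifferentiableAt ℝ I t)
    (hRic : ∀ t ∈ Ioi (0:ℝ), deriv I t + (2 / N) * (I t) ^ 2 ≤ 0) :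
    ∀ t ∈ Ioi (0:ℝ), I t ≤ N / (2 * t) := by
  intro t ht
  have ht0 : 0 < t := ht
  rcases le_or_gt (I t) 0 with hIt | hIt
  · exact hIt.trans (by positivity)
  have hanti := antitoneOn_of_deriv_add_mul_sq_nonpos (convex_Ioi 0) (by positivity) hd hRic
  have hsub : Ioc 0 t ⊆ Ioi 0 := Ioc_subset_Ioi_self
  have hpos : ∀ x ∈ Ioc 0 t, 0 < I x := fun x hx => hIt.trans_le (hanti hx.1 ht hx.2)
  have hbound := mul_le_inv_of_deriv_add_mul_sq_nonpos ht0 (fun x hx => hd x (hsub hx)) hpos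
    fun x hx => hRic x (hsub hx)
  calc I t = ((I t)⁻¹)⁻¹ := (inv_inv _).symm
    _ ≤ (2 / N * t)⁻¹ := inv_anti₀ (by positivity) hbound
    _ = N / (2 * t) := by field_simp

/-- If `I ≥ 0` is differentiable on `(0,∞)` and satisfies
`I' + (2/N) I² ≤ 0` (with `N > 0`) and `limsup_{t→0+} t I(t) ≤ N/2`, then
`I(t) ≤ N/(2t)` for all `t > 0`. -/
theorem fisher_info_bound (I : ℝ → ℝ) (N : ℝ) (hN : 0 < N)
    (hd : ∀ t ∈ Ioi (0:ℝ), DifferentiableAt ℝ I t)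
    (hnn : ∀ t ∈ Ioi (0:ℝ), 0 ≤ I t)
    (hRic : ∀ t ∈ Ioi (0:ℝ), deriv I t + (2 / N) * (I t) ^ 2 ≤ 0)
    (hlim : Filter.limsup (fun t => t * I t) (nhdsWithin 0 (Ioi 0)) ≤ N / 2) :
    ∀ t ∈ Ioi (0:ℝ), I t ≤ N / (2 * t) :=
  fisher_info_bound_general I N hN hd hRic
end

section
/- Let H : (0,T) → ℝ be twice differentiable with w(t) := H'(t)/4 + a > 0, where a ≥ 0 is a constant, and suppose H''(t) + (2/N) H'(t)² ≤ 0 on (0,T) for some N > 0. Then the function Y_a(t) = H(t) + (N/2) log(w(t)) − 4a t is non-increasing on (0,T). -/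
open Real Set

/-! With `u = H'`, `v = H''` and `w = u/4 + a > 0`, the derivative of `Y_a` is
`u + (N/2)(v/4)/w - 4a`. Multiplied by `w` it becomes `(N/8) v + (u - 4a) w = (N/8)(v + (2/N) u²) - 4a²`,
which is `≤ 0` by the differential inequality. -/

noncomputable def logEntropy (H : ℝ → ℝ) (N a t : ℝ) : ℝ :=
  H t + (N / 2) * Real.log (deriv H t / 4 + a) - 4 * a * t

theorem hasDerivAt_logEntropy {H : ℝ → ℝ} {N a t : ℝ} (hH : DifferentiableAt ℝ H t)
    (hH' : DifferentiableAt ℝ (deriv H) t) (hw : deriv H t / 4 + a ≠ 0) :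
    HasDerivAt (logEntropy H N a)
      (deriv H t + (N / 2) * (deriv (deriv H) t / 4 / (deriv H t / 4 + a)) - 4 * a) t := by
  have hlog := ((hH'.hasDerivAt.div_const 4).add_const a).log hw
  have hlin : HasDerivAt (fun s => 4 * a * s) (4 * a) t := by
    simpa using (hasDerivAt_id t).const_mul (4 * a)
  exact (hH.hasDerivAt.add (hlog.const_mul (N / 2))).sub hlin

theorem logEntropy_deriv_nonpos {N a u v : ℝ} (hN : 0 < N) (hw : 0 < u / 4 + a)
    (hRic : v + (2 / N) * u ^ 2 ≤ 0) :
    u + (N / 2) * (v / 4 / (u / 4 + a)) - 4 * a ≤ 0 := by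
  have hmul : (u + (N / 2) * (v / 4 / (u / 4 + a)) - 4 * a) * (u / 4 + a)
      = (N / 8) * (v + (2 / N) * u ^ 2) - 4 * a ^ 2 := by
    have hw4 : u + 4 * a ≠ 0 := by linarith
    field_simp
    ring
  have hnum : (N / 8) * (v + (2 / N) * u ^ 2) - 4 * a ^ 2 ≤ 0 := by
    linarith [mul_nonpos_of_nonneg_of_nonpos (by positivity : 0 ≤ N / 8) hRic, sq_nonneg a]
  rw [← hmul] at hnum
  exact nonpos_of_mul_nonpos_left hnum hw

theorem log_entropy_antitone_general (H : ℝ → ℝ) (N a T : ℝ) (hN : 0 < N)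
    (hd1 : ∀ t ∈ Ioo (0:ℝ) T, DifferentiableAt ℝ H t)
    (hd2 : ∀ t ∈ Ioo (0:ℝ) T, DifferentiableAt ℝ (deriv H) t)
    (hw : ∀ t ∈ Ioo (0:ℝ) T, 0 < deriv H t / 4 + a)
    (hRic : ∀ t ∈ Ioo (0:ℝ) T,
      deriv (deriv H) t + (2 / N) * (deriv H t) ^ 2 ≤ 0) :
    AntitoneOn (fun t => H t + (N / 2) * Real.log (deriv H t / 4 + a) - 4 * a * t)
      (Ioo (0:ℝ) T) := by
  have hderiv : ∀ t ∈ Ioo (0:ℝ) T, HasDerivAt (logEntropy H N a)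
      (deriv H t + (N / 2) * (deriv (deriv H) t / 4 / (deriv H t / 4 + a)) - 4 * a) t :=
    fun t ht => hasDerivAt_logEntropy (hd1 t ht) (hd2 t ht) (hw t ht).ne'
  have hint : interior (Ioo (0:ℝ) T) = Ioo 0 T := interior_Ioo
  exact antitoneOn_of_hasDerivWithinAt_nonpos (convex_Ioo 0 T)
    (fun t ht => (hderiv t ht).continuousAt.continuousWithinAt)
    (fun t ht => (hderiv t (hint ▸ ht)).hasDerivWithinAt)
    (fun t ht => logEntropy_deriv_nonpos hN (hw t (hint ▸ ht)) (hRic t (hint ▸ ht)))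

/-- if `H` is twice differentiable on `(0,T)` with `w(t) = H'(t)/4 + a > 0`
for a constant `a ≥ 0`, and `H'' + (2/N)(H')² ≤ 0` (with `N > 0`), then
`Y_a(t) = H(t) + (N/2) log(H'(t)/4 + a) − 4at` is non-increasing on `(0,T)`. -/
theorem log_entropy_antitone (H : ℝ → ℝ) (N a T : ℝ) (hN : 0 < N) (ha : 0 ≤ a)
    (hd1 : ∀ t ∈ Ioo (0:ℝ) T, DifferentiableAt ℝ H t)
    (hd2 : ∀ t ∈ Ioo (0:ℝ) T, DifferentiableAt ℝ (deriv H) t)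
    (hw : ∀ t ∈ Ioo (0:ℝ) T, 0 < deriv H t / 4 + a)
    (hRic : ∀ t ∈ Ioo (0:ℝ) T,
      deriv (deriv H) t + (2 / N) * (deriv H t) ^ 2 ≤ 0) :
    AntitoneOn (fun t => H t + (N / 2) * Real.log (deriv H t / 4 + a) - 4 * a * t)
      (Ioo (0:ℝ) T) :=
  log_entropy_antitone_general H N a T hN hd1 hd2 hw hRic
end

section
/- Let w : ℝ → ℝ, f : ℝ → ℝ be the quantities w = 2Lf − |∇f|², interpreted on a smooth function f = −log u on Euclidean space ℝⁿ where u > 0 solves the heat equation ∂ₜu = Δu. Then w satisfies (∂ₜ − Δ) w = −2‖∇²f‖² − 2⟨∇w, ∇f⟩. -/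
open Real Set

/-- Partial derivative in the `i`-th coordinate direction of Euclidean space. -/
noncomputable def pd {n : ℕ} (f : EuclideanSpace ℝ (Fin n) → ℝ) (i : Fin n)
    (x : EuclideanSpace ℝ (Fin n)) : ℝ :=
  fderiv ℝ f x (EuclideanSpace.single i 1)

/-- Euclidean Laplacian: trace of the Hessian. -/
noncomputable def lap {n : ℕ} (f : EuclideanSpace ℝ (Fin n) → ℝ)
    (x : EuclideanSpace ℝ (Fin n)) : ℝ :=
  ∑ i, pd (pd f i) i x

/-- Squared norm of the gradient. -/
noncomputable def gradsq {n : ℕ} (f : EuclideanSpace ℝ (Fin n) → ℝ)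
    (x : EuclideanSpace ℝ (Fin n)) : ℝ :=
  ∑ i, (pd f i x) ^ 2

/-- Inner product of two gradients. -/
noncomputable def gradInner {n : ℕ} (f g : EuclideanSpace ℝ (Fin n) → ℝ)
    (x : EuclideanSpace ℝ (Fin n)) : ℝ :=
  ∑ i, pd f i x * pd g i x

/-- Squared Hilbert–Schmidt norm of the Hessian. -/
noncomputable def hessSq {n : ℕ} (f : EuclideanSpace ℝ (Fin n) → ℝ)
    (x : EuclideanSpace ℝ (Fin n)) : ℝ :=
  ∑ i, ∑ j, (pd (pd f j) i x) ^ 2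

namespace NiAux
variable {n : ℕ}
local notation "E" => EuclideanSpace ℝ (Fin n)
local notation "ee" i => EuclideanSpace.single i (1:ℝ)

lemma pd_apply (f : E → ℝ) (i : Fin n) : pd f i = fun x => fderiv ℝ f x (ee i) := rfl

lemma contDiff_pd {f : E → ℝ} (hf : ContDiff ℝ (⊤ : ℕ∞) f) (i : Fin n) : ContDiff ℝ (⊤ : ℕ∞) (pd f i) :=
  (hf.fderiv_right (by simp)).clm_apply contDiff_const

lemma dAt {F : Type*} [NormedAddCommGroup F] [NormedSpace ℝ F] {f : E → F}
    (hf : ContDiff ℝ (⊤ : ℕ∞) f) (x : E) : DifferentiableAt ℝ f x :=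
  (hf.differentiable (by simp)).differentiableAt

lemma pd_schwarz {f : E → ℝ} (hf : ContDiff ℝ (⊤ : ℕ∞) f) (i j : Fin n) (x : E) :
    pd (pd f i) j x = pd (pd f j) i x := by
  have hd : ContDiff ℝ (⊤ : ℕ∞) (fderiv ℝ f) := hf.fderiv_right (by simp)
  have h1 : ∀ v : E, fderiv ℝ (fun y => fderiv ℝ f y v) x
      = (fderiv ℝ (fderiv ℝ f) x).flip v := by
    intro v
    rw [fderiv_clm_apply (dAt hd x) (differentiableAt_const v)]
    simp
  have hsym := second_derivative_symmetric (f := f) (f' := fderiv ℝ f)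
    (f'' := fderiv ℝ (fderiv ℝ f) x)
    (fun y => (dAt hf y).hasFDerivAt) (dAt hd x).hasFDerivAt
  simp only [pd, pd_apply, h1, ContinuousLinearMap.flip_apply]
  exact hsym _ _

lemma pd_sum {ι : Type*} {x : E} (s : Finset ι) (A : ι → E → ℝ)
    (h : ∀ j ∈ s, DifferentiableAt ℝ (A j) x) (i : Fin n) :
    pd (fun y => ∑ j ∈ s, A j y) i x = ∑ j ∈ s, pd (A j) i x := by
  simp only [pd, fderiv_fun_sum h, ContinuousLinearMap.coe_sum', Finset.sum_apply]

lemma pd_mul {a b : E → ℝ} {x : E} (ha : DifferentiableAt ℝ a x) (hb : DifferentiableAt ℝ b x)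
    (i : Fin n) :
    pd (fun y => a y * b y) i x = pd a i x * b x + a x * pd b i x := by
  simp only [pd, fderiv_fun_mul ha hb, ContinuousLinearMap.add_apply,
    ContinuousLinearMap.coe_smul', Pi.smul_apply, smul_eq_mul]
  ring

lemma pd_sq {a : E → ℝ} {x : E} (ha : DifferentiableAt ℝ a x) (i : Fin n) :
    pd (fun y => (a y) ^ 2) i x = 2 * a x * pd a i x := by
  have : (fun y => (a y) ^ 2) = fun y => a y * a y := by funext y; ring
  rw [this, pd_mul ha ha]; ring

lemma pd_const_mul {a : E → ℝ} {x : E} (ha : DifferentiableAt ℝ a x) (c : ℝ) (i : Fin n) :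
    pd (fun y => c * a y) i x = c * pd a i x := by
  simp only [pd, fderiv_const_mul ha, ContinuousLinearMap.coe_smul', Pi.smul_apply, smul_eq_mul]

lemma pd_sub {a b : E → ℝ} {x : E} (ha : DifferentiableAt ℝ a x) (hb : DifferentiableAt ℝ b x)
    (i : Fin n) :
    pd (fun y => a y - b y) i x = pd a i x - pd b i x := by
  simp only [pd, fderiv_fun_sub ha hb, ContinuousLinearMap.coe_sub', Pi.sub_apply]

lemma pd_neg {a : E → ℝ} {x : E} (i : Fin n) :
    pd (fun y => -(a y)) i x = -pd a i x := by
  simp only [pd, fderiv_fun_neg, ContinuousLinearMap.neg_apply]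

lemma pd_inv {b : E → ℝ} {x : E} (hb : DifferentiableAt ℝ b x)
    (hbx : b x ≠ 0) (i : Fin n) :
    pd (fun y => (b y)⁻¹) i x = -(pd b i x / (b x) ^ 2) := by
  have h : HasFDerivAt (fun y => (b y)⁻¹) ((-(b x ^ 2)⁻¹) • fderiv ℝ b x) x :=
    (hasDerivAt_inv hbx).comp_hasFDerivAt x hb.hasFDerivAt
  simp only [pd, h.fderiv, ContinuousLinearMap.coe_smul', Pi.smul_apply, smul_eq_mul]
  field_simp

lemma diffAt_inv {b : E → ℝ} {x : E} (hb : DifferentiableAt ℝ b x) (hbx : b x ≠ 0) :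
    DifferentiableAt ℝ (fun y => (b y)⁻¹) x :=
  ((hasDerivAt_inv hbx).comp_hasFDerivAt x hb.hasFDerivAt).differentiableAt

lemma pd_div {a b : E → ℝ} {x : E} (ha : DifferentiableAt ℝ a x) (hb : DifferentiableAt ℝ b x)
    (hbx : b x ≠ 0) (i : Fin n) :
    pd (fun y => a y / b y) i x = (pd a i x * b x - a x * pd b i x) / (b x) ^ 2 := by
  have e : (fun y => a y / b y) = fun y => a y * (b y)⁻¹ := by
    funext y; rw [div_eq_mul_inv]
  rw [e, pd_mul ha (diffAt_inv hb hbx), pd_inv hb hbx]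
  field_simp; ring

lemma pd_neg_log {a : E → ℝ} {x : E} (ha : DifferentiableAt ℝ a x) (hax : a x ≠ 0) (i : Fin n) :
    pd (fun y => -Real.log (a y)) i x = -(pd a i x / a x) := by
  have := ((ha.hasFDerivAt.log hax).fun_neg).fderiv
  simp only [pd, this]
  simp [smul_eq_mul]; ring

/-- Bochner identity on flat Euclidean space. -/
lemma bochner {f : E → ℝ} (hf : ContDiff ℝ (⊤ : ℕ∞) f) (x : E) :
    lap (fun y => gradsq f y) x
      = 2 * hessSq f x + 2 * ∑ i, pd (fun y => lap f y) i x * pd f i x := by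
  classical
  have hpd : ∀ i, ContDiff ℝ (⊤ : ℕ∞) (pd f i) := contDiff_pd hf
  have hpd2 : ∀ i j, ContDiff ℝ (⊤ : ℕ∞) (pd (pd f i) j) := fun i j => contDiff_pd (hpd i) j
  have h1 : ∀ (j : Fin n) (y : E), pd (fun z => gradsq f z) j y
      = ∑ i, 2 * pd f i y * pd (pd f i) j y := by
    intro j y
    have e : (fun z => gradsq f z) = fun z => ∑ i, (pd f i z) ^ 2 := rfl
    rw [e, pd_sum _ _ (fun i _ =>
      (((hpd i).pow 2).differentiable (by simp)).differentiableAt) j]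
    exact Finset.sum_congr rfl fun i _ => by rw [pd_sq (dAt (hpd i) y) j]
  have h2 : ∀ (j : Fin n), pd (pd (fun z => gradsq f z) j) j x
      = ∑ i, (2 * (pd (pd f i) j x) ^ 2 + 2 * pd f i x * pd (pd (pd f i) j) j x) := by
    intro j
    have e : pd (fun z => gradsq f z) j = fun y => ∑ i, 2 * pd f i y * pd (pd f i) j y :=
      funext fun y => h1 j y
    rw [e, pd_sum _ _ (fun i _ =>
      ((((contDiff_const.mul (hpd i)).mul (hpd2 i j)).differentiable (by simp))).differentiableAt) j]
    refine Finset.sum_congr rfl fun i _ => ?_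
    rw [pd_mul (dAt (contDiff_const.mul (hpd i)) x) (dAt (hpd2 i j) x) j,
      pd_const_mul (dAt (hpd i) x) 2 j]
    ring
  have h3 : ∀ i j : Fin n, pd (pd (pd f i) j) j x = pd (pd (pd f j) j) i x := by
    intro i j
    have e : pd (pd f i) j = pd (pd f j) i := funext fun y => pd_schwarz hf i j y
    rw [e, pd_schwarz (hpd j) i j x]
  have h4 : ∀ i, pd (fun y => lap f y) i x = ∑ j, pd (pd (pd f j) j) i x := by
    intro i
    have e : (fun y => lap f y) = fun y => ∑ j, pd (pd f j) j y := rfl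
    rw [e, pd_sum _ _ (fun j _ => dAt (hpd2 j j) x) i]
  have lhs : lap (fun y => gradsq f y) x
      = ∑ j, ∑ i, (2 * (pd (pd f i) j x) ^ 2 + 2 * pd f i x * pd (pd (pd f i) j) j x) := by
    unfold lap
    exact Finset.sum_congr rfl fun j _ => h2 j
  rw [lhs]
  have hsplit : ∑ j, ∑ i, (2 * (pd (pd f i) j x) ^ 2 + 2 * pd f i x * pd (pd (pd f i) j) j x)
      = (∑ j, ∑ i, 2 * (pd (pd f i) j x) ^ 2)
        + ∑ j, ∑ i, 2 * pd f i x * pd (pd (pd f i) j) j x := by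
    rw [← Finset.sum_add_distrib]
    exact Finset.sum_congr rfl fun j _ => by rw [← Finset.sum_add_distrib]
  rw [hsplit]
  congr 1
  · unfold hessSq
    rw [Finset.mul_sum]
    exact Finset.sum_congr rfl fun j _ => by rw [Finset.mul_sum]
  · rw [Finset.sum_comm, Finset.mul_sum]
    refine Finset.sum_congr rfl fun i _ => ?_
    rw [h4 i]
    have e : ∑ j, 2 * pd f i x * pd (pd (pd f i) j) j x
        = ∑ j, 2 * pd f i x * pd (pd (pd f j) j) i x :=
      Finset.sum_congr rfl fun j _ => by rw [h3 i j]
    rw [e, ← Finset.mul_sum, Finset.sum_mul, Finset.mul_sum, Finset.mul_sum]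
    exact Finset.sum_congr rfl fun j _ => by ring

/-! ### Product space (time × space) lemmas -/

variable {H : ℝ × EuclideanSpace ℝ (Fin n) → ℝ}

/-- Spatial partial derivative of the time-slices, as a function on the product space. -/
noncomputable def P (H : ℝ × EuclideanSpace ℝ (Fin n) → ℝ) (i : Fin n)
    (p : ℝ × EuclideanSpace ℝ (Fin n)) : ℝ :=
  pd (fun y => H (p.1, y)) i p.2

lemma hasFDerivAt_sliceSpace (hH : ContDiff ℝ (⊤ : ℕ∞) H) (s : ℝ) (x : E) :
    HasFDerivAt (fun y => H (s, y))
      ((fderiv ℝ H (s, x)).comp ((0 : E →L[ℝ] ℝ).prod (ContinuousLinearMap.id ℝ E))) x :=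
  (((hH.differentiable (by simp)) (s, x)).hasFDerivAt).comp x
    ((hasFDerivAt_const s x).prodMk (hasFDerivAt_id x))

lemma pd_sliceSpace (hH : ContDiff ℝ (⊤ : ℕ∞) H) (s : ℝ) (x : E) (i : Fin n) :
    pd (fun y => H (s, y)) i x = fderiv ℝ H (s, x) (0, ee i) := by
  rw [pd, (hasFDerivAt_sliceSpace hH s x).fderiv]
  simp

lemma contDiff_sliceSpace (hH : ContDiff ℝ (⊤ : ℕ∞) H) (s : ℝ) :
    ContDiff ℝ (⊤ : ℕ∞) (fun y => H (s, y)) := hH.comp (contDiff_const.prodMk contDiff_id)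

lemma hasDerivAt_sliceTime (hH : ContDiff ℝ (⊤ : ℕ∞) H) (t : ℝ) (y : E) :
    HasDerivAt (fun s => H (s, y)) (fderiv ℝ H (t, y) (1, 0)) t :=
  HasFDerivAt.comp_hasDerivAt t ((hH.differentiable (by simp)) _).hasFDerivAt
    ((hasDerivAt_id t).prodMk (hasDerivAt_const t y))

lemma contDiff_P (hH : ContDiff ℝ (⊤ : ℕ∞) H) (i : Fin n) : ContDiff ℝ (⊤ : ℕ∞) (P H i) := by
  have e : P H i = fun p => fderiv ℝ H p (0, ee i) := by
    funext p
    rw [show p = (p.1, p.2) from rfl]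
    exact pd_sliceSpace hH p.1 p.2 i
  rw [e]
  exact (hH.fderiv_right (by simp)).clm_apply contDiff_const

lemma commute_deriv_pd (hH : ContDiff ℝ (⊤ : ℕ∞) H) (i : Fin n) (x : E) (t : ℝ) :
    deriv (fun s => pd (fun y => H (s, y)) i x) t
      = pd (fun y => deriv (fun s => H (s, y)) t) i x := by
  have hd : ContDiff ℝ (⊤ : ℕ∞) (fderiv ℝ H) := hH.fderiv_right (by simp)
  have hdd : DifferentiableAt ℝ (fderiv ℝ H) (t, x) :=
    (hd.differentiable (by simp)).differentiableAt
  have hsym := second_derivative_symmetric (f := H) (f' := fderiv ℝ H)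
    (f'' := fderiv ℝ (fderiv ℝ H) (t, x))
    (fun p => ((hH.differentiable (by simp)) p).hasFDerivAt) hdd.hasFDerivAt
  have hφ : ContDiff ℝ (⊤ : ℕ∞) (fun p : ℝ × E => fderiv ℝ H p ((0 : ℝ), (EuclideanSpace.single i 1 : E))) :=
    hd.clm_apply contDiff_const
  have e1 : (fun s => pd (fun y => H (s, y)) i x)
      = fun s => (fun p : ℝ × E => fderiv ℝ H p (0, ee i)) (s, x) :=
    funext fun s => pd_sliceSpace hH s x i
  have hL : deriv (fun s => pd (fun y => H (s, y)) i x) t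
      = fderiv ℝ (fun p : ℝ × E => fderiv ℝ H p (0, ee i)) (t, x) (1, 0) := by
    rw [e1]; exact (hasDerivAt_sliceTime hφ t x).deriv
  have hL2 : fderiv ℝ (fun p : ℝ × E => fderiv ℝ H p (0, ee i)) (t, x) (1, 0)
      = fderiv ℝ (fderiv ℝ H) (t, x) (1, 0) (0, ee i) := by
    rw [fderiv_clm_apply hdd (differentiableAt_const _)]
    simp
  have hψ : ContDiff ℝ (⊤ : ℕ∞) (fun p : ℝ × E => fderiv ℝ H p ((1 : ℝ), (0 : E))) :=
    hd.clm_apply contDiff_const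
  have e2 : (fun y => deriv (fun s => H (s, y)) t)
      = fun y => (fun p : ℝ × E => fderiv ℝ H p (1, 0)) (t, y) :=
    funext fun y => (hasDerivAt_sliceTime hH t y).deriv
  have hR : pd (fun y => deriv (fun s => H (s, y)) t) i x
      = fderiv ℝ (fun p : ℝ × E => fderiv ℝ H p (1, 0)) (t, x) (0, ee i) := by
    rw [e2]; exact pd_sliceSpace hψ t x i
  have hR2 : fderiv ℝ (fun p : ℝ × E => fderiv ℝ H p (1, 0)) (t, x) (0, ee i)
      = fderiv ℝ (fderiv ℝ H) (t, x) (0, ee i) (1, 0) := by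
    rw [fderiv_clm_apply hdd (differentiableAt_const _)]
    simp
  rw [hL, hL2, hR, hR2]
  exact hsym _ _

end NiAux

/-- Ni's identity, Euclidean case: for a smooth positive solution `u`
of the heat equation on `ℝⁿ`, with `f = −log u` and `w = 2Δf − |∇f|²`, one has
`(∂ₜ − Δ)w = −2‖∇²f‖² − 2⟨∇w, ∇f⟩`. -/
theorem ni_harnack_identity {n : ℕ} (T : ℝ)
    (u : ℝ → EuclideanSpace ℝ (Fin n) → ℝ)
    (hsmooth : ContDiff ℝ (⊤ : ℕ∞) (fun p : ℝ × EuclideanSpace ℝ (Fin n) => u p.1 p.2))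
    (hpos : ∀ t x, 0 < u t x)
    (hheat : ∀ t ∈ Ioo (0:ℝ) T, ∀ x, deriv (fun s => u s x) t = lap (u t) x) :
    ∀ t ∈ Ioo (0:ℝ) T, ∀ x,
      deriv (fun s =>
          2 * lap (fun y => -Real.log (u s y)) x
            - gradsq (fun y => -Real.log (u s y)) x) t
        - lap (fun y =>
            2 * lap (fun z => -Real.log (u t z)) y
              - gradsq (fun z => -Real.log (u t z)) y) x
      = -2 * hessSq (fun y => -Real.log (u t y)) x
          - 2 * gradInner
              (fun y => 2 * lap (fun z => -Real.log (u t z)) y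
                - gradsq (fun z => -Real.log (u t z)) y)
              (fun y => -Real.log (u t y)) x := by
  classical
  intro t ht x
  have hF : ContDiff ℝ (⊤ : ℕ∞) (fun p : ℝ × EuclideanSpace ℝ (Fin n) => -Real.log (u p.1 p.2)) :=
    (hsmooth.log (fun p => (hpos p.1 p.2).ne')).neg
  have hf : ContDiff ℝ (⊤ : ℕ∞) (fun y => -Real.log (u t y)) := NiAux.contDiff_sliceSpace hF t
  have hv : ContDiff ℝ (⊤ : ℕ∞) (u t) := NiAux.contDiff_sliceSpace hsmooth t
  have hP1 : ∀ i, ContDiff ℝ (⊤ : ℕ∞)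
      (NiAux.P (fun p : ℝ × EuclideanSpace ℝ (Fin n) => -Real.log (u p.1 p.2)) i) :=
    fun i => NiAux.contDiff_P hF i
  have hP2 : ∀ i, ContDiff ℝ (⊤ : ℕ∞)
      (NiAux.P (NiAux.P (fun p : ℝ × EuclideanSpace ℝ (Fin n) => -Real.log (u p.1 p.2)) i) i) :=
    fun i => NiAux.contDiff_P (hP1 i) i
  -- time derivative
  have hW : HasDerivAt
      (fun s => 2 * lap (fun y => -Real.log (u s y)) x
        - gradsq (fun y => -Real.log (u s y)) x)
      (2 * ∑ i, fderiv ℝ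
          (NiAux.P (NiAux.P (fun p : ℝ × EuclideanSpace ℝ (Fin n) => -Real.log (u p.1 p.2)) i) i)
          (t, x) (1, 0)
        - ∑ i, ((2 : ℕ) : ℝ)
            * (NiAux.P (fun p : ℝ × EuclideanSpace ℝ (Fin n) => -Real.log (u p.1 p.2)) i (t, x))
              ^ (2 - 1)
            * fderiv ℝ
              (NiAux.P (fun p : ℝ × EuclideanSpace ℝ (Fin n) => -Real.log (u p.1 p.2)) i)
              (t, x) (1, 0)) t :=
    ((HasDerivAt.fun_sum fun i _ => NiAux.hasDerivAt_sliceTime (hP2 i) t x).const_mul 2).sub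
      (HasDerivAt.fun_sum fun i _ => (NiAux.hasDerivAt_sliceTime (hP1 i) t x).pow 2)
  have hv1 : ∀ i, fderiv ℝ
      (NiAux.P (fun p : ℝ × EuclideanSpace ℝ (Fin n) => -Real.log (u p.1 p.2)) i) (t, x) (1, 0)
      = pd (fun y => deriv (fun s => -Real.log (u s y)) t) i x := by
    intro i
    rw [← (NiAux.hasDerivAt_sliceTime (hP1 i) t x).deriv]
    exact NiAux.commute_deriv_pd hF i x t
  have hv2 : ∀ i, fderiv ℝ
      (NiAux.P (NiAux.P (fun p : ℝ × EuclideanSpace ℝ (Fin n) => -Real.log (u p.1 p.2)) i) i)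
      (t, x) (1, 0)
      = pd (pd (fun y => deriv (fun s => -Real.log (u s y)) t) i) i x := by
    intro i
    rw [← (NiAux.hasDerivAt_sliceTime (hP2 i) t x).deriv]
    have h2 : (fun y => deriv (fun s =>
        NiAux.P (fun p : ℝ × EuclideanSpace ℝ (Fin n) => -Real.log (u p.1 p.2)) i (s, y)) t)
        = pd (fun y => deriv (fun s => -Real.log (u s y)) t) i := by
      funext y
      exact NiAux.commute_deriv_pd hF i y t
    refine (NiAux.commute_deriv_pd (hP1 i) i x t).trans ?_
    rw [h2]
  have hPf : ∀ i, NiAux.P (fun p : ℝ × EuclideanSpace ℝ (Fin n) => -Real.log (u p.1 p.2)) i (t, x)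
      = pd (fun y => -Real.log (u t y)) i x := fun i => rfl
  have hderiv : deriv (fun s => 2 * lap (fun y => -Real.log (u s y)) x
        - gradsq (fun y => -Real.log (u s y)) x) t
      = 2 * ∑ i, pd (pd (fun y => deriv (fun s => -Real.log (u s y)) t) i) i x
        - ∑ i, 2 * pd (fun y => -Real.log (u t y)) i x
            * pd (fun y => deriv (fun s => -Real.log (u s y)) t) i x := by
    rw [hW.deriv]
    simp only [hv1, hv2, hPf, Nat.reduceSub, pow_one, Nat.cast_ofNat]
  -- the heat equation for f = -log u
  have hft : (fun y => deriv (fun s => -Real.log (u s y)) t)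
      = fun y => lap (fun z => -Real.log (u t z)) y - gradsq (fun z => -Real.log (u t z)) y := by
    funext y
    have hne : u t y ≠ 0 := (hpos t y).ne'
    have hu1 : HasDerivAt (fun s => u s y)
        (fderiv ℝ (fun p : ℝ × EuclideanSpace ℝ (Fin n) => u p.1 p.2) (t, y) (1, 0)) t :=
      NiAux.hasDerivAt_sliceTime hsmooth t y
    have hval : fderiv ℝ (fun p : ℝ × EuclideanSpace ℝ (Fin n) => u p.1 p.2) (t, y) (1, 0)
        = lap (u t) y := by
      rw [← hu1.deriv]; exact hheat t ht y
    have hu2 : HasDerivAt (fun s => u s y) (lap (u t) y) t := hval ▸ hu1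
    have hd : HasDerivAt (fun s => -Real.log (u s y)) (-(lap (u t) y / u t y)) t :=
      (hu2.log hne).neg
    rw [hd.deriv]
    have hpdf : ∀ (z : EuclideanSpace ℝ (Fin n)) (i : Fin n),
        pd (fun w => -Real.log (u t w)) i z = -(pd (u t) i z / u t z) :=
      fun z i => NiAux.pd_neg_log (NiAux.dAt hv z) (hpos t z).ne' i
    have hpdf2 : ∀ i : Fin n, pd (pd (fun w => -Real.log (u t w)) i) i y
        = -((pd (pd (u t) i) i y * u t y - pd (u t) i y * pd (u t) i y) / (u t y) ^ 2) := by
      intro i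
      have e : pd (fun w => -Real.log (u t w)) i = fun z => -(pd (u t) i z / u t z) :=
        funext fun z => hpdf z i
      rw [e, NiAux.pd_neg,
        NiAux.pd_div (NiAux.dAt (NiAux.contDiff_pd hv i) y) (NiAux.dAt hv y) hne]
    have e1 : lap (fun z => -Real.log (u t z)) y - gradsq (fun z => -Real.log (u t z)) y
        = ∑ i : Fin n,
            (-((pd (pd (u t) i) i y * u t y - pd (u t) i y * pd (u t) i y) / (u t y) ^ 2)
              - (-(pd (u t) i y / u t y)) ^ 2) := by
      rw [lap, gradsq, ← Finset.sum_sub_distrib]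
      exact Finset.sum_congr rfl fun i _ => by rw [hpdf2 i, hpdf y i]
    have e2 : -(lap (u t) y / u t y) = ∑ i : Fin n, -(pd (pd (u t) i) i y / u t y) := by
      rw [lap, Finset.sum_div]
      rw [Finset.sum_neg_distrib]
    rw [e1, e2]
    exact Finset.sum_congr rfl fun i _ => by field_simp; ring
  rw [hderiv, hft]
  -- now a purely spatial computation
  have hlapf : ContDiff ℝ (⊤ : ℕ∞) (fun y => lap (fun z => -Real.log (u t z)) y) :=
    ContDiff.sum fun i _ => NiAux.contDiff_pd (NiAux.contDiff_pd hf i) i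
  have hgsq : ContDiff ℝ (⊤ : ℕ∞) (fun y => gradsq (fun z => -Real.log (u t z)) y) :=
    ContDiff.sum fun i _ => (NiAux.contDiff_pd hf i).pow 2
  have hpg : ∀ (i : Fin n) z,
      pd (fun y => lap (fun z => -Real.log (u t z)) y
        - gradsq (fun z => -Real.log (u t z)) y) i z
      = pd (fun y => lap (fun z => -Real.log (u t z)) y) i z
        - pd (fun y => gradsq (fun z => -Real.log (u t z)) y) i z :=
    fun i z => NiAux.pd_sub (NiAux.dAt hlapf z) (NiAux.dAt hgsq z) i
  have hpw : ∀ (i : Fin n) z,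
      pd (fun y => 2 * lap (fun z => -Real.log (u t z)) y
        - gradsq (fun z => -Real.log (u t z)) y) i z
      = 2 * pd (fun y => lap (fun z => -Real.log (u t z)) y) i z
        - pd (fun y => gradsq (fun z => -Real.log (u t z)) y) i z := by
    intro i z
    rw [NiAux.pd_sub (NiAux.dAt (contDiff_const.mul hlapf) z) (NiAux.dAt hgsq z) i,
      NiAux.pd_const_mul (NiAux.dAt hlapf z) 2 i]
  have hpg2 : ∀ i : Fin n,
      pd (pd (fun y => lap (fun z => -Real.log (u t z)) y
        - gradsq (fun z => -Real.log (u t z)) y) i) i x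
      = pd (pd (fun y => lap (fun z => -Real.log (u t z)) y) i) i x
        - pd (pd (fun y => gradsq (fun z => -Real.log (u t z)) y) i) i x := by
    intro i
    have e : pd (fun y => lap (fun z => -Real.log (u t z)) y
        - gradsq (fun z => -Real.log (u t z)) y) i
        = fun z => pd (fun y => lap (fun w => -Real.log (u t w)) y) i z
          - pd (fun y => gradsq (fun w => -Real.log (u t w)) y) i z :=
      funext fun z => hpg i z
    rw [e, NiAux.pd_sub (NiAux.dAt (NiAux.contDiff_pd hlapf i) x)
      (NiAux.dAt (NiAux.contDiff_pd hgsq i) x) i]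
  have hpw2 : ∀ i : Fin n,
      pd (pd (fun y => 2 * lap (fun z => -Real.log (u t z)) y
        - gradsq (fun z => -Real.log (u t z)) y) i) i x
      = 2 * pd (pd (fun y => lap (fun z => -Real.log (u t z)) y) i) i x
        - pd (pd (fun y => gradsq (fun z => -Real.log (u t z)) y) i) i x := by
    intro i
    have e : pd (fun y => 2 * lap (fun z => -Real.log (u t z)) y
        - gradsq (fun z => -Real.log (u t z)) y) i
        = fun z => 2 * pd (fun y => lap (fun w => -Real.log (u t w)) y) i z
          - pd (fun y => gradsq (fun w => -Real.log (u t w)) y) i z :=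
      funext fun z => hpw i z
    rw [e, NiAux.pd_sub (NiAux.dAt (contDiff_const.mul (NiAux.contDiff_pd hlapf i)) x)
      (NiAux.dAt (NiAux.contDiff_pd hgsq i) x) i,
      NiAux.pd_const_mul (NiAux.dAt (NiAux.contDiff_pd hlapf i) x) 2 i]
  -- rewrite all pieces into atoms
  have egw : lap (fun y => 2 * lap (fun z => -Real.log (u t z)) y
      - gradsq (fun z => -Real.log (u t z)) y) x
      = ∑ i, (2 * pd (pd (fun y => lap (fun z => -Real.log (u t z)) y) i) i x
        - pd (pd (fun y => gradsq (fun z => -Real.log (u t z)) y) i) i x) :=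
    Finset.sum_congr rfl fun i _ => hpw2 i
  have egg : ∑ i, pd (pd (fun y => lap (fun z => -Real.log (u t z)) y
      - gradsq (fun z => -Real.log (u t z)) y) i) i x
      = ∑ i, (pd (pd (fun y => lap (fun z => -Real.log (u t z)) y) i) i x
        - pd (pd (fun y => gradsq (fun z => -Real.log (u t z)) y) i) i x) :=
    Finset.sum_congr rfl fun i _ => hpg2 i
  have egi : ∑ i, 2 * pd (fun y => -Real.log (u t y)) i x
      * pd (fun y => lap (fun z => -Real.log (u t z)) y
        - gradsq (fun z => -Real.log (u t z)) y) i x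
      = ∑ i, (2 * (pd (fun y => lap (fun z => -Real.log (u t z)) y) i x
            * pd (fun y => -Real.log (u t y)) i x)
        - 2 * (pd (fun y => gradsq (fun z => -Real.log (u t z)) y) i x
            * pd (fun y => -Real.log (u t y)) i x)) :=
    Finset.sum_congr rfl fun i _ => by rw [hpg i x]; ring
  have egw2 : gradInner (fun y => 2 * lap (fun z => -Real.log (u t z)) y
      - gradsq (fun z => -Real.log (u t z)) y) (fun y => -Real.log (u t y)) x
      = ∑ i, (2 * (pd (fun y => lap (fun z => -Real.log (u t z)) y) i x
            * pd (fun y => -Real.log (u t y)) i x)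
        - (pd (fun y => gradsq (fun z => -Real.log (u t z)) y) i x
            * pd (fun y => -Real.log (u t y)) i x)) :=
    Finset.sum_congr rfl fun i _ => by rw [hpw i x]; ring
  have hb : ∑ i, pd (pd (fun y => gradsq (fun z => -Real.log (u t z)) y) i) i x
      = 2 * hessSq (fun y => -Real.log (u t y)) x
        + 2 * ∑ i, pd (fun y => lap (fun z => -Real.log (u t z)) y) i x
            * pd (fun y => -Real.log (u t y)) i x :=
    NiAux.bochner hf x
  rw [egg, egi, egw, egw2]
  rw [Finset.sum_sub_distrib, Finset.sum_sub_distrib, Finset.sum_sub_distrib,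
    Finset.sum_sub_distrib, ← Finset.mul_sum, ← Finset.mul_sum, ← Finset.mul_sum]
  rw [hb]
  ring
end
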